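/- arXiv:1811.08024 — 2 statements merged into one kernel-verified Lean document; each statement's English description precedes it below -/
import Mathlib

section
/- Let X be a real Hilbert space and H : X → X a bounded self-adjoint operator whose spectrum consists of a simple negative eigenvalue -μ² with unit eigenvector χ, a simple zero eigenvalue with eigenvector e, and a remaining part Σ ⊂ (0,∞) bounded away from 0 (so that ⟨Hv,v⟩ ≥ α‖v‖² on the positive spectral subspace X₊ for some α > 0). Suppose y ∈ X satisfies ⟨Hy,y⟩ < 0. Then there exists α̃ > 0 such that ⟨Hv,v⟩ ≥ α̃‖v‖² for every v ∈ X with ⟨Hy,v⟩ = 0 and ⟨e,v⟩ = 0. -/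
/-!
Write `y = a χ + p` and `v = c χ + q` with `p, q ∈ X₊`: the `e`-components are invisible to `H`,
and that of `v` vanishes because `⟪e, v⟫ = 0`. The form `⟪H ·, ·⟫` is nonnegative on `X₊`, so it
satisfies Cauchy–Schwarz there, and the constraint `⟪H y, v⟫ = 0`, i.e. `μ² a c = ⟪H p, q⟫`, gives
`μ² a² · μ² c² ≤ ⟪H p, p⟫ ⟪H q, q⟫`. As `⟪H y, y⟫ < 0` means `⟪H p, p⟫ < μ² a²`, the negative part
`μ² c²` of `⟪H v, v⟫` is at most the fraction `⟪H p, p⟫ / (μ² a²) < 1` of its positive part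
`⟪H q, q⟫`, which dominates both `α ‖q‖²` and `μ² c²`.
-/

open RealInnerProductSpace

section

variable {X : Type*} [NormedAddCommGroup X] [InnerProductSpace ℝ X]

theorem smul_eq_zero_of_inner_add_smul_eq_zero {e w : X} {d : ℝ} (hw : ⟪e, w⟫ = 0)
    (h : ⟪e, w + d • e⟫ = 0) : d • e = 0 := by
  rw [inner_add_right, hw, zero_add] at h
  rw [← inner_self_eq_zero (𝕜 := ℝ), real_inner_smul_left, h, mul_zero]

theorem norm_smul_add_sq {χ q : X} (hχ : ‖χ‖ = 1) (hχq : ⟪χ, q⟫ = 0) (c : ℝ) :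
    ‖c • χ + q‖ ^ 2 = c ^ 2 + ‖q‖ ^ 2 := by
  rw [norm_add_sq_real, real_inner_smul_left, hχq, norm_smul, hχ, Real.norm_eq_abs, mul_one,
    sq_abs]
  ring

namespace LinearMap.IsSymmetric

variable {T : X →ₗ[ℝ] X}

theorem inner_map_sq_le_of_nonneg (hT : T.IsSymmetric) {K : Submodule ℝ X}
    (hK : ∀ p ∈ K, 0 ≤ ⟪T p, p⟫) {p q : X} (hp : p ∈ K) (hq : q ∈ K) :
    ⟪T p, q⟫ ^ 2 ≤ ⟪T p, p⟫ * ⟪T q, q⟫ := by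
  have hquad : ∀ x : ℝ, 0 ≤ ⟪T q, q⟫ * (x * x) + 2 * ⟪T p, q⟫ * x + ⟪T p, p⟫ := by
    intro x
    have hsymm : ⟪T q, p⟫ = ⟪T p, q⟫ := by rw [hT, real_inner_comm]
    have := hK _ (K.add_mem hp (K.smul_mem x hq))
    simp only [map_add, map_smul, inner_add_left, inner_add_right, real_inner_smul_left,
      real_inner_smul_right, hsymm] at this
    linarith
  have := discrim_le_zero hquad
  rw [discrim] at this
  nlinarith

variable {ν : ℝ} {χ : X} {K : Submodule ℝ X}

theorem inner_map_smul_add_smul_add (hT : T.IsSymmetric) (hχ : ‖χ‖ = 1)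
    (hTχ : T χ = (-ν) • χ) (hχK : ∀ p ∈ K, ⟪χ, p⟫ = 0) {p q : X} (hp : p ∈ K) (hq : q ∈ K)
    (a c : ℝ) : ⟪T (a • χ + p), c • χ + q⟫ = -ν * (a * c) + ⟪T p, q⟫ := by
  have hpχ : ⟪T p, χ⟫ = 0 := by
    rw [hT, hTχ, real_inner_smul_right, real_inner_comm, hχK p hp, mul_zero]
  simp only [map_add, map_smul, hTχ, inner_add_left, inner_add_right, real_inner_smul_left,
    real_inner_smul_right, real_inner_self_eq_norm_sq, hχ, hχK q hq, hpχ]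
  ring

theorem exists_pos_mul_norm_sq_le_inner_map_of_inner_map_eq_zero (hT : T.IsSymmetric)
    (hχ : ‖χ‖ = 1) (hTχ : T χ = (-ν) • χ) (hχK : ∀ p ∈ K, ⟪χ, p⟫ = 0) (hν : 0 < ν)
    {α : ℝ} (hα : 0 < α) (hK : ∀ p ∈ K, α * ‖p‖ ^ 2 ≤ ⟪T p, p⟫) {a : ℝ} {p : X} (hp : p ∈ K)
    (hy : ⟪T (a • χ + p), a • χ + p⟫ < 0) :
    ∃ κ > 0, ∀ c : ℝ, ∀ q ∈ K, ⟪T (a • χ + p), c • χ + q⟫ = 0 →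
      κ * ‖c • χ + q‖ ^ 2 ≤ ⟪T (c • χ + q), c • χ + q⟫ := by
  have hKnonneg : ∀ q ∈ K, 0 ≤ ⟪T q, q⟫ := fun q hq ↦
    (by positivity : 0 ≤ α * ‖q‖ ^ 2).trans (hK q hq)
  set A := ν * a ^ 2
  set P := ⟪T p, p⟫
  have hPA : P < A := by
    rw [hT.inner_map_smul_add_smul_add hχ hTχ hχK hp hp] at hy
    linarith
  have hA : 0 < A := (hKnonneg p hp).trans_lt hPA
  have hgap : 0 < (A - P) / A := div_pos (sub_pos.2 hPA) hA
  refine ⟨(A - P) / A * (min α ν / 2), by positivity, fun c q hq hv ↦ ?_⟩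
  rw [hT.inner_map_smul_add_smul_add hχ hTχ hχK hp hq] at hv
  rw [hT.inner_map_smul_add_smul_add hχ hTχ hχK hq hq, norm_smul_add_sq hχ (hχK q hq)]
  set S := ⟪T q, q⟫
  have hcs : A * (ν * c ^ 2) ≤ P * S := by
    have := hT.inner_map_sq_le_of_nonneg hKnonneg hp hq
    rw [show ⟪T p, q⟫ = ν * (a * c) by linarith] at this
    linear_combination this
  have hdefect : (A - P) / A * S ≤ S - ν * c ^ 2 := by
    rw [div_mul_eq_mul_div, div_le_iff₀ hA]
    linarith
  have hνc : ν * c ^ 2 ≤ S := by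
    have := mul_nonneg hgap.le (hKnonneg q hq)
    linarith
  have hS : min α ν / 2 * (c ^ 2 + ‖q‖ ^ 2) ≤ S := by
    have hq' : min α ν * ‖q‖ ^ 2 ≤ S :=
      (mul_le_mul_of_nonneg_right (min_le_left α ν) (sq_nonneg _)).trans (hK q hq)
    have hc' : min α ν * c ^ 2 ≤ S :=
      (mul_le_mul_of_nonneg_right (min_le_right α ν) (sq_nonneg _)).trans hνc
    linarith
  calc (A - P) / A * (min α ν / 2) * (c ^ 2 + ‖q‖ ^ 2)
      = (A - P) / A * (min α ν / 2 * (c ^ 2 + ‖q‖ ^ 2)) := by ring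
    _ ≤ (A - P) / A * S := by gcongr
    _ ≤ -ν * (c * c) + S := by linarith

end LinearMap.IsSymmetric

end

theorem stmt0_general {X : Type*} [NormedAddCommGroup X] [InnerProductSpace ℝ X]
    (H : X →L[ℝ] X) (hsa : ∀ u v : X, (inner ℝ (H u) (v) : ℝ) = (inner ℝ (u) (H v) : ℝ))
    (μ : ℝ) (hμ : 0 < μ) (χ e : X) (hχnorm : ‖χ‖ = 1)
    (Xplus : Submodule ℝ X)
    (hHχ : H χ = (-μ ^ 2) • χ) (hHe : H e = 0)
    (hχe : (inner ℝ (χ) (e) : ℝ) = 0)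
    (hχp : ∀ p ∈ Xplus, (inner ℝ (χ) (p) : ℝ) = 0)
    (hep : ∀ p ∈ Xplus, (inner ℝ (e) (p) : ℝ) = 0)
    (α : ℝ) (hα : 0 < α)
    (hcoer : ∀ p ∈ Xplus, α * ‖p‖ ^ 2 ≤ (inner ℝ (H p) (p) : ℝ))
    (hdecomp : ∀ v : X, ∃ a b : ℝ, ∃ p ∈ Xplus, v = a • χ + b • e + p)
    (y : X) (hy : (inner ℝ (H y) (y) : ℝ) < 0) :
    ∃ αt > 0, ∀ v : X, (inner ℝ (H y) (v) : ℝ) = 0 → (inner ℝ (e) (v) : ℝ) = 0 →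
      αt * ‖v‖ ^ 2 ≤ (inner ℝ (H v) (v) : ℝ) := by
  have hT : (H : X →ₗ[ℝ] X).IsSymmetric := hsa
  obtain ⟨a, b, p, hp, rfl⟩ := hdecomp y
  have hHy : H (a • χ + b • e + p) = H (a • χ + p) := by
    rw [add_right_comm, map_add, map_smul, hHe, smul_zero, add_zero]
  rw [hHy, add_right_comm, inner_add_right, real_inner_smul_right, hsa _ e, hHe, inner_zero_right,
    mul_zero, add_zero] at hy
  obtain ⟨κ, hκ, hκcoer⟩ := hT.exists_pos_mul_norm_sq_le_inner_map_of_inner_map_eq_zero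
    hχnorm hHχ hχp (by positivity) hα hcoer hp hy
  refine ⟨κ, hκ, fun v hv hev ↦ ?_⟩
  obtain ⟨c, d, q, hq, rfl⟩ := hdecomp v
  rw [add_right_comm (c • χ)] at hv hev ⊢
  have hde : d • e = 0 := smul_eq_zero_of_inner_add_smul_eq_zero
    (by rw [inner_add_right, real_inner_smul_right, real_inner_comm, hχe, hep q hq]; ring) hev
  rw [hde, add_zero] at hv ⊢
  exact hκcoer c q hq (hHy ▸ hv)

/-- Coercivity of a self-adjoint operator on the orthogonal complement of a negative
direction and the kernel direction. -/
theorem stmt0 {X : Type*} [NormedAddCommGroup X] [InnerProductSpace ℝ X] [CompleteSpace X]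
    (H : X →L[ℝ] X) (hsa : ∀ u v : X, (inner ℝ (H u) (v) : ℝ) = (inner ℝ (u) (H v) : ℝ))
    (μ : ℝ) (hμ : 0 < μ) (χ e : X) (hχnorm : ‖χ‖ = 1)
    (Xplus : Submodule ℝ X)
    (hHχ : H χ = (-μ ^ 2) • χ) (hHe : H e = 0)
    (hχe : (inner ℝ (χ) (e) : ℝ) = 0)
    (hχp : ∀ p ∈ Xplus, (inner ℝ (χ) (p) : ℝ) = 0)
    (hep : ∀ p ∈ Xplus, (inner ℝ (e) (p) : ℝ) = 0)
    (α : ℝ) (hα : 0 < α)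
    (hcoer : ∀ p ∈ Xplus, α * ‖p‖ ^ 2 ≤ (inner ℝ (H p) (p) : ℝ))
    (hdecomp : ∀ v : X, ∃ a b : ℝ, ∃ p ∈ Xplus, v = a • χ + b • e + p)
    (y : X) (hy : (inner ℝ (H y) (y) : ℝ) < 0) :
    ∃ αt > 0, ∀ v : X, (inner ℝ (H y) (v) : ℝ) = 0 → (inner ℝ (e) (v) : ℝ) = 0 →
      αt * ‖v‖ ^ 2 ≤ (inner ℝ (H v) (v) : ℝ) :=
  stmt0_general H hsa μ hμ χ e hχnorm Xplus hHχ hHe hχe hχp hep α hα hcoer hdecomp y hy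
end

section
/- The power series identity −e^z E₁(z) = (γ + log z)e^z − ∑_{k=1}^∞ (H_k/k!) z^k holds for z ∈ ℂ∖(−∞,0], where γ is the Euler–Mascheroni constant and H_k = ∑_{j=1}^k 1/j. -/
open Finset

private lemma alt_choose_sum (m : ℕ) (hm : m ≠ 0) :
    ∑ j ∈ range m, (-1 : ℂ) ^ j * (m.choose (j + 1) : ℂ) = 1 := by
  have h := Int.alternating_sum_range_choose_of_ne (n := m) hm
  have h2 : ∑ i ∈ range (m + 1), (-1 : ℂ) ^ i * (m.choose i : ℂ) = 0 := by
    have := congrArg (Int.cast : ℤ → ℂ) h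
    push_cast at this
    simpa using this
  rw [Finset.sum_range_succ'] at h2
  simp only [pow_zero, Nat.choose_zero_right, Nat.cast_one, one_mul, pow_succ] at h2
  have h3 : ∀ x ∈ range m, (-1 : ℂ) ^ x * -1 * (m.choose (x + 1) : ℂ)
      = -((-1 : ℂ) ^ x * (m.choose (x + 1) : ℂ)) := by intro x _; ring
  rw [Finset.sum_congr rfl h3, Finset.sum_neg_distrib] at h2
  linear_combination -h2

private lemma key (n : ℕ) :
    ∑ j ∈ range n, (-1 : ℂ) ^ j * (n.choose (j + 1) : ℂ) / ((j : ℂ) + 1)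
      = ∑ j ∈ range n, 1 / ((j : ℂ) + 1) := by
  induction n with
  | zero => simp
  | succ n ih =>
    have hsplit : ∀ j ∈ range (n + 1),
        (-1 : ℂ) ^ j * ((n + 1).choose (j + 1) : ℂ) / ((j : ℂ) + 1)
          = (-1 : ℂ) ^ j * (n.choose j : ℂ) / ((j : ℂ) + 1)
            + (-1 : ℂ) ^ j * (n.choose (j + 1) : ℂ) / ((j : ℂ) + 1) := by
      intro j _
      rw [Nat.choose_succ_succ]
      push_cast
      ring
    rw [Finset.sum_congr rfl hsplit, Finset.sum_add_distrib]
    have hA : ∑ j ∈ range (n + 1), (-1 : ℂ) ^ j * (n.choose j : ℂ) / ((j : ℂ) + 1)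
        = 1 / ((n : ℂ) + 1) := by
      have step : ∀ j ∈ range (n + 1),
          (-1 : ℂ) ^ j * (n.choose j : ℂ) / ((j : ℂ) + 1)
            = ((-1 : ℂ) ^ j * ((n + 1).choose (j + 1) : ℂ)) * (1 / ((n : ℂ) + 1)) := by
        intro j _
        have hc := Nat.add_one_mul_choose_eq n j
        have hc' : ((n : ℂ) + 1) * (n.choose j : ℂ)
            = ((n + 1).choose (j + 1) : ℂ) * ((j : ℂ) + 1) := by
          exact_mod_cast congrArg (Nat.cast : ℕ → ℂ) hc
        have hj : ((j : ℂ) + 1) ≠ 0 := Nat.cast_add_one_ne_zero j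
        have hn : ((n : ℂ) + 1) ≠ 0 := Nat.cast_add_one_ne_zero n
        field_simp
        linear_combination hc'
      rw [Finset.sum_congr rfl step, ← Finset.sum_mul, alt_choose_sum (n + 1) (by omega)]
      ring
    have hB : ∑ j ∈ range (n + 1), (-1 : ℂ) ^ j * (n.choose (j + 1) : ℂ) / ((j : ℂ) + 1)
        = ∑ j ∈ range n, (-1 : ℂ) ^ j * (n.choose (j + 1) : ℂ) / ((j : ℂ) + 1) := by
      rw [Finset.sum_range_succ, Nat.choose_succ_self]
      simp
    rw [hA, hB, ih, Finset.sum_range_succ]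
    ring

private lemma cauchy (z : ℂ) :
    Complex.exp z * ∑' k : ℕ, (-1 : ℂ) ^ k * z ^ (k + 1)
        / ((k + 1 : ℂ) * (Nat.factorial (k + 1) : ℂ))
      = ∑' k : ℕ, (∑ j ∈ Finset.range (k + 1), (1 : ℂ) / (j + 1))
          / (Nat.factorial (k + 1) : ℂ) * z ^ (k + 1) := by
  set a : ℕ → ℂ := fun n => z ^ n / (Nat.factorial n : ℂ) with ha_def
  set b : ℕ → ℂ := fun n =>
    if n = 0 then 0 else (-1 : ℂ) ^ (n - 1) * z ^ n / ((n : ℂ) * (Nat.factorial n : ℂ))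
    with hb_def
  set c : ℕ → ℂ := fun n =>
    (∑ j ∈ Finset.range n, (1 : ℂ) / (j + 1)) / (Nat.factorial n : ℂ) * z ^ n with hc_def
  have ha : Summable fun n => ‖a n‖ := by
    have := Real.summable_pow_div_factorial ‖z‖
    apply this.congr
    intro n
    simp [ha_def, norm_div, norm_pow]
  have hble : ∀ n, ‖b n‖ ≤ ‖a n‖ := by
    intro n
    rcases Nat.eq_zero_or_pos n with h | h
    · simp [hb_def, h]
    · have hn0 : n ≠ 0 := h.ne'
      simp only [hb_def, if_neg hn0, ha_def]
      rw [norm_div, norm_div, norm_mul, norm_mul, norm_pow, norm_pow, norm_neg, norm_one,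
        one_pow, one_mul]
      have h1 : (0 : ℝ) < ‖(Nat.factorial n : ℂ)‖ := by
        simp [Complex.norm_natCast, Nat.factorial_pos]
      apply div_le_div_of_nonneg_left (by positivity) h1 ?_ |>.trans_eq rfl
      · calc ‖(Nat.factorial n : ℂ)‖ = 1 * ‖(Nat.factorial n : ℂ)‖ := by ring
          _ ≤ ‖(n : ℂ)‖ * ‖(Nat.factorial n : ℂ)‖ := by
              apply mul_le_mul_of_nonneg_right _ (norm_nonneg _)
              simp only [Complex.norm_natCast]
              exact_mod_cast h
  have hb : Summable fun n => ‖b n‖ :=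
    Summable.of_nonneg_of_le (fun n => norm_nonneg _) hble ha
  have hexp : Complex.exp z = ∑' n, a n := by
    rw [Complex.exp_eq_exp_ℂ, NormedSpace.exp_eq_tsum_div]
  have hS : (∑' k : ℕ, (-1 : ℂ) ^ k * z ^ (k + 1)
      / ((k + 1 : ℂ) * (Nat.factorial (k + 1) : ℂ))) = ∑' n, b n := by
    rw [Summable.tsum_eq_zero_add hb.of_norm]
    simp only [hb_def, if_pos rfl, zero_add]
    apply tsum_congr
    intro k
    rw [if_neg (Nat.succ_ne_zero k)]
    push_cast
    ring_nf
  -- the antidiagonal sums equal c n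
  have hanti : ∀ n, (∑ p ∈ Finset.HasAntidiagonal.antidiagonal n, a p.1 * b p.2) = c n := by
    intro n
    have hswap : (∑ p ∈ Finset.HasAntidiagonal.antidiagonal n, a p.1 * b p.2)
        = ∑ p ∈ Finset.HasAntidiagonal.antidiagonal n, b p.1 * a p.2 := by
      rw [← Finset.Nat.sum_antidiagonal_swap]
      apply Finset.sum_congr rfl
      intro p _
      simp [mul_comm]
    rw [hswap, Finset.Nat.sum_antidiagonal_eq_sum_range_succ (fun i j => b i * a j) n,
      Finset.sum_range_succ']
    simp only [hb_def, if_pos rfl, zero_mul, add_zero]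
    have hterm : ∀ j ∈ Finset.range n,
        (if j + 1 = 0 then 0 else (-1 : ℂ) ^ (j + 1 - 1) * z ^ (j + 1)
            / (((j + 1 : ℕ) : ℂ) * (Nat.factorial (j + 1) : ℂ))) * a (n - (j + 1))
          = ((-1 : ℂ) ^ j * (n.choose (j + 1) : ℂ) / ((j : ℂ) + 1))
              / (Nat.factorial n : ℂ) * z ^ n := by
      intro j hj
      have hjn : j + 1 ≤ n := Finset.mem_range.mp hj
      rw [if_neg (Nat.succ_ne_zero j)]
      simp only [Nat.add_sub_cancel, ha_def]
      have hzpow : z ^ (j + 1) * z ^ (n - (j + 1)) = z ^ n := by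
        rw [← pow_add]
        congr 1
        omega
      have hfac := Nat.choose_mul_factorial_mul_factorial hjn
      have hfac' : ((n.choose (j + 1) : ℂ)) * (Nat.factorial (j + 1) : ℂ)
          * (Nat.factorial (n - (j + 1)) : ℂ) = (Nat.factorial n : ℂ) := by
        exact_mod_cast congrArg (Nat.cast : ℕ → ℂ) hfac
      have h1 : ((Nat.factorial (j + 1) : ℂ)) ≠ 0 := by
        exact_mod_cast (Nat.factorial_pos (j + 1)).ne'
      have h2 : ((Nat.factorial (n - (j + 1)) : ℂ)) ≠ 0 := by
        exact_mod_cast (Nat.factorial_pos (n - (j + 1))).ne'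
      have h3 : ((Nat.factorial n : ℂ)) ≠ 0 := by
        exact_mod_cast (Nat.factorial_pos n).ne'
      have hj1 : ((j : ℂ) + 1) ≠ 0 := Nat.cast_add_one_ne_zero j
      rw [div_mul_div_comm, mul_assoc, hzpow]
      push_cast
      field_simp
      linear_combination (-z ^ n) * hfac'
    rw [Finset.sum_congr rfl hterm, ← Finset.sum_mul, ← Finset.sum_div, key n]
  rw [hexp, hS, tsum_mul_tsum_eq_tsum_sum_antidiagonal_of_summable_norm ha hb,
    tsum_congr hanti]
  have hcs : Summable c :=
    ((summable_norm_sum_mul_antidiagonal_of_summable_norm ha hb).of_norm.congr hanti)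
  rw [Summable.tsum_eq_zero_add hcs]
  have hc0 : c 0 = 0 := by simp [hc_def]
  rw [hc0, zero_add]

/-- The power series identity `−e^z E₁(z) = (γ + log z)e^z − ∑_{k≥1} (H_k/k!) z^k`, given
the classical series `E₁(z) = −γ − log z + ∑_{k≥1} (−1)^{k+1} z^k/(k·k!)` on the slit
plane. Here `H_k` is the `k`-th harmonic number. -/
theorem stmt17 (γ : ℝ) (E₁ : ℂ → ℂ)
    (hE : ∀ z ∈ Complex.slitPlane,
      E₁ z = -(γ : ℂ) - Complex.log z
        + ∑' k : ℕ, (-1 : ℂ) ^ k * z ^ (k + 1) / ((k + 1 : ℂ) * (Nat.factorial (k + 1) : ℂ))) :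
    ∀ z ∈ Complex.slitPlane,
      -Complex.exp z * E₁ z
        = ((γ : ℂ) + Complex.log z) * Complex.exp z
          - ∑' k : ℕ, (∑ j ∈ Finset.range (k + 1), (1 : ℂ) / (j + 1))
              / (Nat.factorial (k + 1) : ℂ) * z ^ (k + 1) := by
  intro z hz
  rw [hE z hz, ← cauchy z]
  ring
end
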